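/- Let (Φ_t)_{t≥0} be a continuous one-parameter semigroup on the right half-plane Π with Denjoy–Wolff point at ∞, generated by −φ, where φ admits the representation φ(w) = β + γ/(w+1) + ϱ₁(w) with β, γ ∈ ℂ, β ≠ 0, and w^{1+ε}·ϱ₁(w) → 0 as |w| → ∞, w ∈ Π, for some ε > 0. If Im(γ/β²) ≠ 0, then for every w ∈ Π, |Im( Φ_t(w)·conj(β) )| → ∞ as t → ∞; in particular, no trajectory {Φ_t(w) : t ≥ 0} has an asymptote. -/

import Mathlib

open Complex Filter Topology Set MeasureTheory

noncomputable section

/-- The right half-plane in the complex plane. -/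
def rightHalfPlane : Set ℂ := {w : ℂ | 0 < w.re}

/-- A continuous one-parameter semigroup `Φ` on the right half-plane generated by `-φ`,
where `Re φ ≥ 0`: each `Φ t` is a holomorphic self-map of the half-plane, `Φ 0 = id`,
`Φ (t+s) = Φ t ∘ Φ s`, and for each `w` the trajectory `t ↦ Φ t w` solves
`∂Φ_t(w)/∂t = φ(Φ_t(w))`. -/
structure IsContinuousSemigroupOnHalfPlane (Φ : ℝ → ℂ → ℂ) (φ : ℂ → ℂ) : Prop where
  mapsTo : ∀ t : ℝ, 0 ≤ t → Set.MapsTo (Φ t) rightHalfPlane rightHalfPlane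
  holomorphic : ∀ t : ℝ, 0 ≤ t → DifferentiableOn ℂ (Φ t) rightHalfPlane
  init : ∀ w ∈ rightHalfPlane, Φ 0 w = w
  semigroup : ∀ t s : ℝ, 0 ≤ t → 0 ≤ s → ∀ w ∈ rightHalfPlane, Φ (t + s) w = Φ t (Φ s w)
  gen_holomorphic : DifferentiableOn ℂ φ rightHalfPlane
  gen_re_nonneg : ∀ w ∈ rightHalfPlane, 0 ≤ (φ w).re
  ode : ∀ w ∈ rightHalfPlane, ∀ t : ℝ, 0 ≤ t →
    HasDerivWithinAt (fun s : ℝ => Φ s w) (φ (Φ t w)) (Set.Ici (0 : ℝ)) t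

/-- The semigroup has Denjoy–Wolff point at `∞`. -/
def HasDWPointInfty (Φ : ℝ → ℂ → ℂ) : Prop :=
  ∀ w ∈ rightHalfPlane, Tendsto (fun t : ℝ => ‖Φ t w‖) atTop atTop

/-- The filter of neighbourhoods of `∞` within a set `S ⊆ ℂ`:
`|w| → ∞` with `w ∈ S`. -/
def atInftyWithin (S : Set ℂ) : Filter ℂ :=
  Filter.comap (fun z : ℂ => ‖z‖) Filter.atTop ⊓ Filter.principal S

/-- `σ` solves `σ' = 1/φ` on the right half-plane with `σ 1 = 0`. -/
def IsSigmaFunction (φ σ : ℂ → ℂ) : Prop :=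
  (∀ w ∈ rightHalfPlane, HasDerivAt σ (1 / φ w) w) ∧ σ 1 = 0


open Asymptotics ComplexConjugate

/-! Along a trajectory `u t = Φ t w` one has `u' = φ(u) → β`, so `‖u t‖ ≳ t`; then
`u' - β = O(1/t)` gives `u t = t β + O(log t)`. Feeding this back into the expansion of `φ`,
`φ(u t) = β + γ / (β t) + O(t^(-1-δ))` with `δ = min ε (1/2)`, an integrable error.
Multiplying by `conj β` and taking imaginary parts, `Im (u t · conj β) = c log t + O(1)` with
`c = Im (γ conj β / β) = ‖β‖² Im (γ / β²) ≠ 0`. -/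

section MeanValue

variable {E : Type*} [NormedAddCommGroup E] [NormedSpace ℝ E]

theorem norm_sub_le_sub_of_norm_deriv_le {f f' : ℝ → E} {G G' : ℝ → ℝ} {a t : ℝ}
    (hf : ∀ x, a ≤ x → HasDerivWithinAt f (f' x) (Ici a) x)
    (hG : ∀ x, a ≤ x → HasDerivAt G (G' x) x)
    (bound : ∀ x, a ≤ x → ‖f' x‖ ≤ G' x) (ht : a ≤ t) :
    ‖f t - f a‖ ≤ G t - G a :=
  image_norm_le_of_norm_deriv_right_le_deriv_boundary' (f := fun x => f x - f a)
    (B := fun x => G x - G a)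
    (fun x hx => ((hf x hx.1).continuousWithinAt.mono Icc_subset_Ici_self).sub
      continuousWithinAt_const)
    (fun x hx => ((hf x hx.1).mono (Ici_subset_Ici.2 hx.1)).sub_const (f a))
    (by simp)
    (fun x hx => ((hG x hx.1).continuousAt.sub continuousAt_const).continuousWithinAt)
    (fun x hx => ((hG x hx.1).sub_const (G a)).hasDerivWithinAt)
    (fun x hx => bound x hx.1) ⟨ht, le_rfl⟩

theorem exists_eventually_norm_le_of_isBigOWith_deriv {f f' : ℝ → E} {G G' : ℝ → ℝ}
    {a K : ℝ} (hf : ∀ x, a ≤ x → HasDerivWithinAt f (f' x) (Ici a) x)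
    (hG : ∀ x, a ≤ x → HasDerivAt G (G' x) x) (hG' : ∀ᶠ x in atTop, 0 ≤ G' x)
    (hO : IsBigOWith K atTop f' G') :
    ∃ C, ∀ᶠ t in atTop, ‖f t‖ ≤ C + K * G t := by
  obtain ⟨T, hT⟩ := eventually_atTop.1 (hG'.and hO.bound)
  set b := max a T
  refine ⟨‖f b‖ - K * G b, (eventually_ge_atTop b).mono fun t ht => ?_⟩
  have key := norm_sub_le_sub_of_norm_deriv_le (a := b) (G := fun x => K * G x)
    (fun x hx => (hf x (le_of_max_le_left hx)).mono (Ici_subset_Ici.2 (le_max_left a T)))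
    (fun x hx => (hG x (le_of_max_le_left hx)).const_mul K)
    (fun x hx => by
      obtain ⟨hG'x, hbound⟩ := hT x (le_of_max_le_right hx)
      rwa [Real.norm_of_nonneg hG'x] at hbound) ht
  linarith [norm_sub_norm_le (f t) (f b)]

theorem exists_eventually_norm_le_of_deriv_isBigO_rpow {f f' : ℝ → E} {a δ : ℝ}
    (ha : 0 < a) (hδ : 0 < δ) (hf : ∀ x, a ≤ x → HasDerivWithinAt f (f' x) (Ici a) x)
    (hO : f' =O[atTop] fun t => t ^ (-(1 + δ))) :
    ∃ C, ∀ᶠ t in atTop, ‖f t‖ ≤ C := by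
  obtain ⟨K, hK, hKO⟩ := hO.exists_nonneg
  have hG : ∀ x, a ≤ x → HasDerivAt (fun t => -t ^ (-δ) / δ) (x ^ (-(1 + δ))) x := by
    intro x hx
    refine (((Real.hasDerivAt_rpow_const (p := -δ) (Or.inl (ha.trans_le hx).ne')).neg).div_const
      δ).congr_deriv ?_
    rw [show -δ - 1 = -(1 + δ) by ring]
    field_simp
  obtain ⟨C, hC⟩ := exists_eventually_norm_le_of_isBigOWith_deriv hf hG
    ((eventually_gt_atTop 0).mono fun t ht => (Real.rpow_pos_of_pos ht _).le) hKO
  refine ⟨C, (hC.and (eventually_gt_atTop 0)).mono fun t ⟨hCt, ht⟩ => hCt.trans ?_⟩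
  have hpos : 0 ≤ t ^ (-δ) / δ := div_nonneg (Real.rpow_nonneg ht.le _) hδ.le
  nlinarith [neg_div δ (t ^ (-δ))]

end MeanValue

theorem norm_le_norm_add_one {w : ℂ} (hw : w ∈ rightHalfPlane) : ‖w‖ ≤ ‖w + 1‖ := by
  have hre : 0 < w.re := hw
  rw [Complex.norm_def, Complex.norm_def]
  gcongr
  simp only [Complex.normSq_apply, Complex.add_re, Complex.add_im, Complex.one_re,
    Complex.one_im]
  nlinarith

theorem eventually_one_le_norm_atInftyWithin (S : Set ℂ) :
    ∀ᶠ w in atInftyWithin S, 1 ≤ ‖w‖ :=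
  (tendsto_comap.eventually (eventually_ge_atTop 1)).filter_mono inf_le_left

theorem eventually_mem_atInftyWithin (S : Set ℂ) : ∀ᶠ w in atInftyWithin S, w ∈ S :=
  mem_inf_of_right (mem_principal_self S)

theorem tendsto_atInftyWithin {u : ℝ → ℂ} {S : Set ℂ} (hmem : ∀ t, 0 ≤ t → u t ∈ S)
    (hu : Tendsto (fun t => ‖u t‖) atTop atTop) : Tendsto u atTop (atInftyWithin S) :=
  tendsto_inf.2 ⟨tendsto_comap_iff.2 hu, tendsto_principal.2 (eventually_atTop.2 ⟨0, hmem⟩)⟩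

theorem isBigO_rpow_neg_of_tendsto_cpow_mul {S : Set ℂ} {f : ℂ → ℂ} {a : ℝ}
    (h : Tendsto (fun w => w ^ (a : ℂ) * f w) (atInftyWithin S) (𝓝 0)) :
    f =O[atInftyWithin S] fun w => ‖w‖ ^ (-a) := by
  refine IsBigO.of_bound 1 ?_
  filter_upwards [eventually_one_le_norm_atInftyWithin S,
    h.eventually (Metric.closedBall_mem_nhds 0 one_pos)] with w hw1 hw
  rw [dist_zero_right, norm_mul, norm_cpow_real] at hw
  rw [Real.norm_of_nonneg (Real.rpow_nonneg (norm_nonneg w) _), one_mul,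
    Real.rpow_neg (norm_nonneg w), ← one_div,
    le_div_iff₀ (Real.rpow_pos_of_pos (one_pos.trans_le hw1) a), mul_comm]
  exact hw

theorem isBigO_div_add_one_atInftyWithin_rightHalfPlane (γ : ℂ) :
    (fun w => γ / (w + 1)) =O[atInftyWithin rightHalfPlane] fun w => ‖w‖⁻¹ := by
  refine IsBigO.of_bound ‖γ‖ ?_
  filter_upwards [eventually_one_le_norm_atInftyWithin rightHalfPlane,
    eventually_mem_atInftyWithin rightHalfPlane] with w hw1 hw
  rw [norm_div, Real.norm_of_nonneg (inv_nonneg.2 (norm_nonneg w)), div_eq_mul_inv]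
  gcongr
  exact norm_le_norm_add_one hw

theorem isBigO_norm_inv_of_isBigO_sub_sub_div {φ : ℂ → ℂ} {β γ : ℂ} {ε : ℝ}
    (hε : 0 ≤ ε)
    (hρ : (fun w => φ w - β - γ / (w + 1)) =O[atInftyWithin rightHalfPlane]
      fun w => ‖w‖ ^ (-(1 + ε))) :
    (fun w => φ w - β) =O[atInftyWithin rightHalfPlane] fun w => ‖w‖⁻¹ := by
  have hpow : (fun w : ℂ => ‖w‖ ^ (-(1 + ε))) =O[atInftyWithin rightHalfPlane]
      fun w => ‖w‖⁻¹ := by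
    refine IsBigO.of_bound' ((eventually_one_le_norm_atInftyWithin _).mono fun w hw => ?_)
    rw [Real.norm_of_nonneg (Real.rpow_nonneg (norm_nonneg w) _),
      Real.norm_of_nonneg (inv_nonneg.2 (norm_nonneg w)), ← Real.rpow_neg_one]
    exact Real.rpow_le_rpow_of_exponent_le hw (by linarith)
  exact ((hρ.trans hpow).add (isBigO_div_add_one_atInftyWithin_rightHalfPlane γ)).congr_left
    fun w => by ring

theorem isBigO_rpow_rpow_atTop {p q : ℝ} (h : p ≤ q) :
    (fun t : ℝ => t ^ p) =O[atTop] fun t => t ^ q := by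
  refine IsBigO.of_bound' ((eventually_ge_atTop 1).mono fun t ht => ?_)
  have ht0 : 0 ≤ t := zero_le_one.trans ht
  rw [Real.norm_of_nonneg (Real.rpow_nonneg ht0 _), Real.norm_of_nonneg (Real.rpow_nonneg ht0 _)]
  exact Real.rpow_le_rpow_of_exponent_le ht h

theorem isBigO_rpow_neg_of_mul_le {f : ℝ → ℝ} {κ p : ℝ} (hκ : 0 < κ) (hp : 0 ≤ p)
    (h : ∀ᶠ t in atTop, κ * t ≤ f t) :
    (fun t => f t ^ (-p)) =O[atTop] fun t => t ^ (-p) := by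
  refine IsBigO.of_bound (κ ^ (-p)) ?_
  filter_upwards [h, eventually_gt_atTop 0] with t ht ht0
  have hκt : 0 < κ * t := mul_pos hκ ht0
  rw [Real.norm_of_nonneg (Real.rpow_nonneg (hκt.le.trans ht) _),
    Real.norm_of_nonneg (Real.rpow_nonneg ht0.le _), ← Real.mul_rpow hκ.le ht0.le]
  exact Real.rpow_le_rpow_of_nonpos hκt ht (neg_nonpos.2 hp)

theorem im_mul_conj_div_ne_zero {β γ : ℂ} (hβ : β ≠ 0) (h : (γ / β ^ 2).im ≠ 0) :
    (γ * conj β / β).im ≠ 0 := by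
  have hid : γ * conj β / β = γ / β ^ 2 * (Complex.normSq β : ℂ) := by
    rw [← Complex.mul_conj]
    field_simp
  rw [hid, Complex.mul_im, Complex.ofReal_re, Complex.ofReal_im, mul_zero, zero_add]
  exact mul_ne_zero h (Complex.normSq_pos.2 hβ).ne'

theorem tendsto_abs_atTop_of_abs_sub_mul_log_le {f : ℝ → ℝ} {c C : ℝ} (hc : c ≠ 0)
    (h : ∀ᶠ t in atTop, |f t - c * Real.log t| ≤ C) :
    Tendsto (fun t => |f t|) atTop atTop := by
  refine tendsto_atTop_mono' atTop ?_ (tendsto_atTop_add_const_right atTop (-C)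
    (Real.tendsto_log_atTop.const_mul_atTop (abs_pos.2 hc)))
  filter_upwards [h, eventually_ge_atTop 1] with t ht ht1
  have hlog : |c * Real.log t| = |c| * Real.log t := by
    rw [abs_mul, abs_of_nonneg (Real.log_nonneg ht1)]
  have htri := abs_sub_abs_le_abs_sub (c * Real.log t) (f t)
  rw [abs_sub_comm, hlog] at htri
  linarith

section Trajectory

variable {u v : ℝ → ℂ} {a : ℝ} {β : ℂ}

theorem hasDerivWithinAt_sub_mul_ofReal
    (hu : ∀ t, a ≤ t → HasDerivWithinAt u (v t) (Ici a) t) :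
    ∀ t, a ≤ t → HasDerivWithinAt (fun s => u s - s * β) (v t - β) (Ici a) t := fun t ht =>
  ((hu t ht).sub ((hasDerivAt_id t).ofReal_comp.mul_const β).hasDerivWithinAt).congr_deriv
    (by simp)

theorem eventually_half_mul_le_norm (hu : ∀ t, a ≤ t → HasDerivWithinAt u (v t) (Ici a) t)
    (hv : Tendsto v atTop (𝓝 β)) : ∀ᶠ t in atTop, ‖β‖ / 2 * t ≤ ‖u t‖ := by
  rcases eq_or_ne β 0 with rfl | hβ
  · exact Eventually.of_forall fun t => by simp
  have hb : 0 < ‖β‖ := norm_pos_iff.2 hβ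
  have hO : IsBigOWith (‖β‖ / 4) atTop (fun t => v t - β) fun _ => (1 : ℝ) :=
    ((isLittleO_one_iff ℝ).2 (tendsto_sub_nhds_zero_iff.2 hv)).def' (by positivity)
  obtain ⟨C, hC⟩ := exists_eventually_norm_le_of_isBigOWith_deriv
    (hasDerivWithinAt_sub_mul_ofReal hu) (fun x _ => hasDerivAt_id' x)
    (Eventually.of_forall fun _ => zero_le_one) hO
  filter_upwards [hC, eventually_ge_atTop (4 * C / ‖β‖), eventually_ge_atTop 0]
    with t hCt htC ht0
  have hnorm : ‖(t : ℂ) * β‖ = ‖β‖ * t := by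
    rw [norm_mul, Complex.norm_real, Real.norm_of_nonneg ht0, mul_comm]
  have htri := norm_sub_norm_le ((t : ℂ) * β) (u t)
  rw [norm_sub_rev, hnorm] at htri
  rw [div_le_iff₀ hb] at htC
  nlinarith

theorem isBigO_log_of_sub_isBigO_inv (ha : 0 < a)
    (hu : ∀ t, a ≤ t → HasDerivWithinAt u (v t) (Ici a) t)
    (hv : (fun t => v t - β) =O[atTop] fun t => t⁻¹) :
    (fun t => u t - t * β) =O[atTop] Real.log := by
  obtain ⟨K, hK⟩ := hv.isBigOWith
  obtain ⟨C, hC⟩ := exists_eventually_norm_le_of_isBigOWith_deriv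
    (hasDerivWithinAt_sub_mul_ofReal hu) (fun x hx => Real.hasDerivAt_log (ha.trans_le hx).ne')
    ((eventually_ge_atTop 0).mono fun t ht => inv_nonneg.2 ht) hK
  have hbound : (fun t => u t - t * β) =O[atTop] fun t => C + K * Real.log t :=
    IsBigO.of_bound' (hC.mono fun t ht => ht.trans (Real.le_norm_self _))
  exact hbound.trans
    (Real.isLittleO_const_log_atTop.isBigO.add ((isBigO_refl _ _).const_mul_left K))

theorem isBigO_sub_sub_div_mul_ofReal {φ : ℂ → ℂ} {γ : ℂ} {ε δ κ : ℝ}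
    (hβ : β ≠ 0) (hκ : 0 < κ) (hε : 0 ≤ ε) (hδε : δ ≤ ε) (hδ1 : δ < 1)
    (hρ : (fun w => φ w - β - γ / (w + 1)) =O[atInftyWithin rightHalfPlane]
      fun w => ‖w‖ ^ (-(1 + ε)))
    (hu : Tendsto u atTop (atInftyWithin rightHalfPlane))
    (hlow : ∀ᶠ t in atTop, κ * t ≤ ‖u t‖)
    (hlog : (fun t => u t - t * β) =O[atTop] Real.log) :
    (fun t => φ (u t) - β - γ / (β * t)) =O[atTop] fun t => t ^ (-(1 + δ)) := by
  have hmem := hu.eventually (eventually_mem_atInftyWithin rightHalfPlane)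
  have hrem : (fun t => φ (u t) - β - γ / (u t + 1)) =O[atTop] fun t => t ^ (-(1 + δ)) :=
    ((hρ.comp_tendsto hu).trans (isBigO_rpow_neg_of_mul_le hκ (by linarith) hlow)).trans
      (isBigO_rpow_rpow_atTop (by linarith))
  have hnum : (fun t : ℝ => (t : ℂ) * β - u t - 1) =O[atTop] Real.log :=
    (hlog.neg_left.sub ((isBigO_const_const (1 : ℂ) one_ne_zero atTop).trans
      Real.isLittleO_const_log_atTop.isBigO)).congr_left fun t => by ring
  have hden : (fun t => ((u t + 1) * (β * t))⁻¹) =O[atTop] fun t => t ^ (-2 : ℝ) := by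
    refine IsBigO.of_bound (κ * ‖β‖)⁻¹ ?_
    filter_upwards [hlow, hmem, eventually_gt_atTop 0] with t ht hmemt ht0
    have hle : κ * t ≤ ‖u t + 1‖ := ht.trans (norm_le_norm_add_one hmemt)
    rw [norm_inv, norm_mul, norm_mul, Complex.norm_real, Real.norm_of_nonneg ht0.le,
      Real.norm_of_nonneg (Real.rpow_nonneg ht0.le _), Real.rpow_neg ht0.le,
      Real.rpow_two, ← mul_inv]
    apply inv_anti₀ (by positivity)
    nlinarith [mul_le_mul_of_nonneg_right hle (mul_nonneg (norm_nonneg β) ht0.le)]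
  have hdiff : (fun t => γ / (u t + 1) - γ / (β * t)) =O[atTop] fun t => t ^ (-(1 + δ)) := by
    have hlogsmul := isBigO_rpow_top_log_smul (a := 2) (b := 1 + δ) (by linarith)
      (isBigO_refl (fun t : ℝ => t ^ (-2 : ℝ)) atTop)
    -- `γ / (u + 1) - γ / (β t) = γ (β t - u - 1) / ((u + 1) β t)`, numerator `O(log t)`
    refine (((hnum.mul hden).trans hlogsmul).const_mul_left γ).congr' ?_ EventuallyEq.rfl
    filter_upwards [hmem, eventually_gt_atTop 0] with t hmemt ht0
    have hu1 : u t + 1 ≠ 0 := fun h => by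
      have hre : (u t + 1).re = 0 := by rw [h, Complex.zero_re]
      have hpos : 0 < (u t).re := hmemt
      simp only [Complex.add_re, Complex.one_re] at hre
      linarith
    have ht : (t : ℂ) ≠ 0 := Complex.ofReal_ne_zero.2 ht0.ne'
    field_simp
    ring
  exact (hrem.add hdiff).congr_left fun t => by ring

theorem hasDerivWithinAt_im_mul_conj_sub_mul_log (γ : ℂ)
    (ha : 0 < a) (hu : ∀ t, a ≤ t → HasDerivWithinAt u (v t) (Ici a) t) :
    ∀ t, a ≤ t → HasDerivWithinAt
      (fun s => (u s * conj β).im - (γ * conj β / β).im * Real.log s)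
      (((v t - β - γ / (β * t)) * conj β).im) (Ici a) t := by
  intro t ht
  have ht0 : t ≠ 0 := (ha.trans_le ht).ne'
  have him := Complex.imCLM.hasFDerivAt.comp_hasDerivWithinAt t ((hu t ht).mul_const (conj β))
  have hlog := ((Real.hasDerivAt_log ht0).const_mul (γ * conj β / β).im).hasDerivWithinAt
    (s := Ici a)
  refine (him.sub hlog).congr_deriv ?_
  have hdiv : γ / (β * t) * conj β = γ * conj β / β / (t : ℝ) := by ring
  rw [sub_mul, sub_mul, Complex.sub_im, Complex.sub_im, Complex.mul_conj, Complex.ofReal_im, hdiv,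
    Complex.div_ofReal_im, Complex.imCLM_apply, sub_zero, div_eq_mul_inv _ t]

theorem tendsto_abs_im_mul_conj_atTop {φ : ℂ → ℂ} {γ : ℂ} {ε : ℝ}
    (hβ : β ≠ 0) (hε : 0 < ε) (hγβ : (γ / β ^ 2).im ≠ 0)
    (hρ : (fun w => φ w - β - γ / (w + 1)) =O[atInftyWithin rightHalfPlane]
      fun w => ‖w‖ ^ (-(1 + ε)))
    (hderiv : ∀ t, 1 ≤ t → HasDerivWithinAt u (φ (u t)) (Ici 1) t)
    (hu : Tendsto u atTop (atInftyWithin rightHalfPlane)) :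
    Tendsto (fun t => |(u t * conj β).im|) atTop atTop := by
  have hv : (fun t => φ (u t) - β) =O[atTop] fun t => ‖u t‖⁻¹ :=
    (isBigO_norm_inv_of_isBigO_sub_sub_div hε.le hρ).comp_tendsto hu
  have hnorm : Tendsto (fun t => ‖u t‖) atTop atTop :=
    tendsto_comap_iff.1 (hu.mono_right inf_le_left)
  have hlow := eventually_half_mul_le_norm hderiv
    (tendsto_sub_nhds_zero_iff.1 (hv.trans_tendsto (tendsto_inv_atTop_zero.comp hnorm)))
  have hκ : 0 < ‖β‖ / 2 := half_pos (norm_pos_iff.2 hβ)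
  have hinv : (fun t => ‖u t‖⁻¹) =O[atTop] fun t => t⁻¹ := by
    simpa only [Real.rpow_neg_one] using isBigO_rpow_neg_of_mul_le hκ zero_le_one hlow
  have hlog := isBigO_log_of_sub_isBigO_inv one_pos hderiv (hv.trans hinv)
  have hδ : 0 < min ε (1 / 2) := lt_min hε one_half_pos
  have hrem := isBigO_sub_sub_div_mul_ofReal hβ hκ hε.le (min_le_left ε (1 / 2))
    ((min_le_right ε _).trans_lt one_half_lt_one) hρ hu hlow hlog
  have him : (fun t => ((φ (u t) - β - γ / (β * t)) * conj β).im) =O[atTop]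
      fun t => t ^ (-(1 + min ε (1 / 2))) :=
    (IsBigO.of_bound ‖β‖ (Eventually.of_forall fun t => by
      rw [Real.norm_eq_abs, mul_comm ‖β‖, ← Complex.norm_conj β, ← norm_mul]
      exact Complex.abs_im_le_norm _)).trans hrem
  obtain ⟨C, hC⟩ := exists_eventually_norm_le_of_deriv_isBigO_rpow one_pos hδ
    (hasDerivWithinAt_im_mul_conj_sub_mul_log γ one_pos hderiv) him
  exact tendsto_abs_atTop_of_abs_sub_mul_log_le (im_mul_conj_div_ne_zero hβ hγβ) hC

end Trajectory

theorem stmt17 (Φ : ℝ → ℂ → ℂ) (φ : ℂ → ℂ) (β γ : ℂ) (ε : ℝ)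
    (hsg : IsContinuousSemigroupOnHalfPlane Φ φ)
    (hdw : HasDWPointInfty Φ)
    (hβ : β ≠ 0) (hε : 0 < ε)
    (hrep : Tendsto (fun w : ℂ => w ^ ((1 + ε : ℝ) : ℂ) * (φ w - β - γ / (w + 1)))
      (atInftyWithin rightHalfPlane) (𝓝 0))
    (hγβ : (γ / β ^ 2).im ≠ 0) :
    ∀ w ∈ rightHalfPlane,
      Tendsto (fun t : ℝ => |(Φ t w * (starRingEnd ℂ) β).im|) atTop atTop := by
  intro w hw
  exact tendsto_abs_im_mul_conj_atTop hβ hε hγβ (isBigO_rpow_neg_of_tendsto_cpow_mul hrep)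
    (fun t ht => (hsg.ode w hw t (zero_le_one.trans ht)).mono (Ici_subset_Ici.2 zero_le_one))
    (tendsto_atInftyWithin (fun t ht => hsg.mapsTo t ht hw) (hdw w hw))
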